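/- arXiv:1108.6279 — 6 statements merged into one kernel-verified Lean document; each statement's English description precedes it below -/
import Mathlib

section
/- Let Γ be a group and define a relation on the set S of infinite virtually cyclic subgroups of Γ by H ∼ K iff H ∩ K is infinite. Then ∼ is an equivalence relation on S. -/
/-!
In a virtually cyclic group every infinite subgroup `A` has finite index: `A` meets the cyclic
finite-index subgroup `C` in an infinite, hence nontrivial, subgroup of `C`, and nontrivial
subgroups of a cyclic group have finite index. Hence two infinite subgroups of an infinite virtually
cyclic group `K` meet in a subgroup of finite index, which is again infinite. Applied inside `K` to
`H ∩ K` and `K ∩ L`, this gives transitivity.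
-/

def VirtuallyCyclic (G : Type*) [Group G] : Prop :=
  ∃ C : Subgroup G, IsCyclic C ∧ C.FiniteIndex

namespace Subgroup

variable {G : Type*} [Group G]

theorem finiteIndex_of_ne_bot_of_isCyclic [IsCyclic G] {A : Subgroup G} (hA : A ≠ ⊥) :
    A.FiniteIndex := by
  obtain ⟨g, hg⟩ := IsCyclic.exists_zpow_surjective (G := G)
  obtain ⟨a, haA, ha⟩ := A.bot_or_exists_ne_one.resolve_left hA
  obtain ⟨m, rfl⟩ := hg a
  have hm : m ≠ 0 := by rintro rfl; exact ha (zpow_zero g)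
  have hcover : Set.univ ⊆ (fun k : ℤ => (g ^ k : G ⧸ A)) '' Set.Ico 0 |m| := by
    rintro ⟨x⟩ -
    obtain ⟨n, rfl⟩ := hg x
    -- `g ^ n ≡ g ^ (n % m)` modulo `A`, since `g ^ m ∈ A`
    refine ⟨n % m, ⟨Int.emod_nonneg n hm, Int.emod_lt_abs n hm⟩, QuotientGroup.eq.2 ?_⟩
    have : -(n % m) + n = m * (n / m) := by rw [Int.emod_def]; ring
    rw [← zpow_neg, ← zpow_add, this, zpow_mul]
    exact A.zpow_mem haA _
  have : Finite (G ⧸ A) := Set.finite_univ_iff.1 (((Set.finite_Ico 0 |m|).image _).subset hcover)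
  exact finiteIndex_of_finite_quotient

theorem infinite_of_finiteIndex [Infinite G] (H : Subgroup G) [H.FiniteIndex] : Infinite H := by
  refine not_finite_iff_infinite.1 fun hH => ?_
  exact not_finite_iff_infinite.2 ‹Infinite G› ((finite_iff_finite_and_finiteIndex H).2 ⟨hH, ‹_›⟩)

theorem infinite_subgroupOf_iff {H K : Subgroup G} :
    Infinite (H.subgroupOf K) ↔ Infinite ↥(H ⊓ K) := by
  rw [← inf_subgroupOf_right]
  exact (subgroupOfEquivOfLe inf_le_right).toEquiv.infinite_iff

end Subgroup

namespace VirtuallyCyclic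

open Subgroup

variable {G : Type*} [Group G]

theorem finiteIndex_of_infinite (hG : VirtuallyCyclic G) (A : Subgroup G) [Infinite A] :
    A.FiniteIndex := by
  obtain ⟨C, hCcyc, hC⟩ := hG
  have : Infinite (C.subgroupOf A) := infinite_of_finiteIndex _
  have hAC : A.subgroupOf C ≠ ⊥ := by
    rw [Ne, subgroupOf_eq_bot, disjoint_def]
    intro h
    obtain ⟨x, hx⟩ := exists_ne (1 : C.subgroupOf A)
    exact hx (Subtype.ext (Subtype.ext (h (x : A).2 x.2)))
  have : (A.subgroupOf C).FiniteIndex := finiteIndex_of_ne_bot_of_isCyclic hAC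
  rw [finiteIndex_iff, ← relIndex_top_right]
  exact relIndex_ne_zero_trans FiniteIndex.index_ne_zero
    (C.relIndex_top_right ▸ FiniteIndex.index_ne_zero)

theorem infinite_inf (hG : VirtuallyCyclic G) (A B : Subgroup G) [Infinite A] [Infinite B] :
    Infinite ↥(A ⊓ B) := by
  have : Infinite G := Infinite.of_injective _ A.subtype_injective
  have := hG.finiteIndex_of_infinite A
  have := hG.finiteIndex_of_infinite B
  exact infinite_of_finiteIndex _

theorem infinite_inf_trans {H K L : Subgroup G} (hK : VirtuallyCyclic K)
    (hHK : Infinite ↥(H ⊓ K)) (hKL : Infinite ↥(K ⊓ L)) : Infinite ↥(H ⊓ L) := by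
  have : Infinite (H.subgroupOf K) := infinite_subgroupOf_iff.2 hHK
  have : Infinite (L.subgroupOf K) := infinite_subgroupOf_iff.2 (inf_comm K L ▸ hKL)
  have : Infinite ↥(H ⊓ L ⊓ K) :=
    infinite_subgroupOf_iff.1 (hK.infinite_inf (H.subgroupOf K) (L.subgroupOf K))
  exact Infinite.of_injective _ (inclusion_injective (inf_le_left : H ⊓ L ⊓ K ≤ H ⊓ L))

end VirtuallyCyclic

theorem stmt4 {Γ : Type*} [Group Γ] :
    Equivalence (fun (H K : {L : Subgroup Γ // Infinite L ∧ VirtuallyCyclic L}) =>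
      Infinite ↥(H.1 ⊓ K.1)) :=
  ⟨fun H => (inf_idem H.1).symm ▸ H.2.1, fun {H K} h => inf_comm H.1 K.1 ▸ h,
    fun {_ K _} hHK hKL => K.2.2.infinite_inf_trans hHK hKL⟩
end

section
/- Let Γ be a group and let H and K be infinite virtually cyclic subgroups of Γ with H ∩ K infinite. Then Comm_Γ(H) = Comm_Γ(K). -/
def conjSub {Γ : Type*} [Group Γ] (x : Γ) (H : Subgroup Γ) : Subgroup Γ :=
  H.map (MulAut.conj x⁻¹).toMonoidHom

def commSet {Γ : Type*} [Group Γ] (H : Subgroup Γ) : Set Γ :=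
  {x | Infinite ↥(H ⊓ conjSub x H)}

/-! In an infinite virtually cyclic group every infinite subgroup has finite index: it meets the
finite-index cyclic subgroup nontrivially, and nontrivial subgroups of a cyclic group have finite
index. So for infinite virtually cyclic subgroups, "`H ⊓ K` is infinite" is exactly Mathlib's
`Subgroup.Commensurable H K`, and `commSet H` is Mathlib's commensurator of `H`, which depends
only on the commensurability class of `H`. -/

open Subgroup
open scoped Pointwise

section

variable {G : Type*} [Group G]

theorem Subgroup.index_ne_zero_of_ne_bot_of_isCyclic [IsCyclic G] {A : Subgroup G}
    (hA : A ≠ ⊥) : A.index ≠ 0 := by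
  obtain ⟨g, hg⟩ := IsCyclic.exists_generator (α := G)
  set φ : ℤ →+ Additive G := zmultiplesHom _ (Additive.ofMul g)
  have hφ : Function.Surjective φ := fun x => by
    obtain ⟨k, hk⟩ := hg x.toMul
    exact ⟨k, congrArg Additive.ofMul hk⟩
  obtain ⟨⟨a, haA⟩, ha⟩ := ne_bot_iff_exists_ne_one.mp hA
  obtain ⟨n, hn⟩ := hφ (Additive.ofMul a)
  have hn0 : n ≠ 0 := by
    rintro rfl
    exact ha (Subtype.ext (by simpa [φ] using hn.symm))
  have hle : AddSubgroup.zmultiples n ≤ A.toAddSubgroup.comap φ := by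
    rw [AddSubgroup.zmultiples_le, AddSubgroup.mem_comap, hn]
    exact haA
  rw [← index_toAddSubgroup, ← AddSubgroup.index_comap_of_surjective _ hφ]
  exact ne_zero_of_dvd_ne_zero (by rwa [Int.index_zmultiples, Int.natAbs_ne_zero])
    (AddSubgroup.index_dvd_of_le hle)

theorem Subgroup.infinite_of_index_ne_zero [Infinite G] {A : Subgroup G} (h : A.index ≠ 0) :
    Infinite A := by
  rw [← not_finite_iff_infinite]
  intro hA
  have hcard := A.card_mul_index
  rw [Nat.card_eq_zero_of_infinite (α := G), mul_eq_zero] at hcard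
  exact hcard.elim Nat.card_pos.ne' h

theorem VirtuallyCyclic.index_ne_zero (hG : VirtuallyCyclic G) {A : Subgroup G}
    [Infinite A] : A.index ≠ 0 := by
  obtain ⟨C, hC, hCfin⟩ := hG
  have : Infinite (C.subgroupOf A) :=
    infinite_of_index_ne_zero (C.subgroupOf A).index_ne_zero_of_finite
  have hAC : A.subgroupOf C ≠ ⊥ := by
    obtain ⟨⟨⟨a, haA⟩, haC⟩, ha⟩ := exists_ne (1 : C.subgroupOf A)
    refine ne_bot_iff_exists_ne_one.mpr ⟨⟨⟨a, haC⟩, haA⟩, fun h => ha ?_⟩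
    simpa using congrArg (fun x : A.subgroupOf C => ((x : C) : G)) h
  rw [← relIndex_top_right]
  exact relIndex_ne_zero_trans (index_ne_zero_of_ne_bot_of_isCyclic hAC)
    (by rw [relIndex_top_right]; exact hCfin.index_ne_zero)

theorem VirtuallyCyclic.of_mulEquiv {G' : Type*} [Group G'] (e : G ≃* G')
    (hG : VirtuallyCyclic G) : VirtuallyCyclic G' := by
  obtain ⟨C, hC, hCG⟩ := hG
  refine ⟨C.map (e : G →* G'), isCyclic_of_surjective _ (e.subgroupMap C).surjective,
    ⟨?_⟩⟩
  rw [index_map_equiv]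
  exact hCG.index_ne_zero

theorem VirtuallyCyclic.relIndex_ne_zero {H K : Subgroup G} (hH : VirtuallyCyclic H)
    (hHK : Infinite ↥(H ⊓ K)) : K.relIndex H ≠ 0 := by
  have : Infinite (K.subgroupOf H) := by
    rw [← inf_subgroupOf_right, inf_comm]
    exact (subgroupOfEquivOfLe inf_le_left).toEquiv.infinite_iff.mpr hHK
  exact hH.index_ne_zero

theorem Subgroup.infinite_inf_of_relIndex_ne_zero {H K : Subgroup G} [Infinite H]
    (h : K.relIndex H ≠ 0) : Infinite ↥(H ⊓ K) := by
  have : Infinite (K.subgroupOf H) := infinite_of_index_ne_zero h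
  rw [← inf_subgroupOf_right, inf_comm] at this
  exact (subgroupOfEquivOfLe inf_le_left).toEquiv.infinite_iff.mp this

theorem Subgroup.commensurable_iff_infinite_inf {H K : Subgroup G} [Infinite H]
    (hH : VirtuallyCyclic H) (hK : VirtuallyCyclic K) :
    H.Commensurable K ↔ Infinite ↥(H ⊓ K) :=
  ⟨fun h => infinite_inf_of_relIndex_ne_zero h.2, fun h =>
    ⟨hK.relIndex_ne_zero (by rwa [inf_comm]), hH.relIndex_ne_zero h⟩⟩

theorem conjSub_eq_smul (x : G) (H : Subgroup G) :
    conjSub x H = ConjAct.toConjAct x⁻¹ • H := by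
  ext y
  simp [conjSub, mem_smul_pointwise_iff_exists, ConjAct.smul_def]

theorem commSet_eq_commensurator {H : Subgroup G} [Infinite H] (hH : VirtuallyCyclic H) :
    commSet H = Commensurable.commensurator H := by
  ext x
  rw [commSet, Set.mem_ofPred_eq, conjSub_eq_smul, SetLike.mem_coe, ← inv_mem_iff,
    Commensurable.commensurator_mem_iff, Commensurable.comm, commensurable_iff_infinite_inf hH
    (hH.of_mulEquiv (equivSMul _ H))]

end

theorem stmt7 {Γ : Type*} [Group Γ] (H K : Subgroup Γ) [Infinite H] [Infinite K]
    (hH : VirtuallyCyclic H) (hK : VirtuallyCyclic K)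
    (hHK : Infinite ↥(H ⊓ K)) :
    commSet H = commSet K := by
  rw [commSet_eq_commensurator hH, commSet_eq_commensurator hK,
    Commensurable.eq ((commensurable_iff_infinite_inf hH hK).mpr hHK)]
end

section
/- Let Γ = G ⋊_φ ℤ with G torsion, and let K = ⟨(a, t^k)⟩ with k ≥ 1. Then G ∩ Comm_Γ(K) = {g ∈ G : ∃ n ≥ 1, φ^{nk}(g) = α_{n,k}⁻¹ g α_{n,k}}, where α_{n,k} = ∏_{i=0}^{n-1} φ^{ik}(a). -/
/-!
An element `g ∈ G` commensurates `K = ⟨x⟩`, `x = (a, t^k)`, exactly when it commutes with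
some nontrivial power `x^n`. Indeed, projecting to `⟨t⟩ ≅ ℤ` kills `g` and sends `x` to an
element of infinite order, so a coincidence `g x^m g⁻¹ = x^j` forces `m = j`; conversely a power
commuting with `g` generates an infinite subgroup of `K ∩ K^g`. Finally
`x^n = (α_{n,k}, t^{nk})`, and `(g, 1)` commutes with `(b, s)` iff `φ^s(g) = b⁻¹ g b`.
-/

section commSet

variable {Γ : Type*} [Group Γ]

theorem mem_conjSub_iff {g y : Γ} {H : Subgroup Γ} :
    y ∈ conjSub g H ↔ g * y * g⁻¹ ∈ H := by
  simp only [conjSub, Subgroup.mem_map, MulEquiv.coe_toMonoidHom, MulAut.conj_apply, inv_inv]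
  constructor
  · rintro ⟨z, hz, rfl⟩
    simpa [mul_assoc] using hz
  · exact fun hy => ⟨g * y * g⁻¹, hy, by group⟩

theorem mem_conjSub_of_commute {g y : Γ} {H : Subgroup Γ} (hy : y ∈ H) (hgy : Commute g y) :
    y ∈ conjSub g H := by
  rwa [mem_conjSub_iff, hgy.eq, mul_inv_cancel_right]

theorem mem_commSet_of_le {g : Γ} {H L : Subgroup Γ} (hL : (L : Set Γ).Infinite)
    (hLH : L ≤ H ⊓ conjSub g H) : g ∈ commSet H :=
  Set.infinite_coe_iff.mpr (hL.mono hLH)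

theorem commute_pow_natAbs_iff {g x : Γ} {m : ℤ} :
    Commute g (x ^ m.natAbs) ↔ Commute g (x ^ m) := by
  rcases Int.natAbs_eq m with h | h <;> rw [h]
  · rw [Int.natAbs_natCast, zpow_natCast]
  · rw [Int.natAbs_neg, Int.natAbs_natCast, zpow_neg, zpow_natCast, Commute.inv_right_iff]

theorem mem_commSet_zpowers_iff_exists_commute {M : Type*} [Group M] (f : Γ →* M) {g x : Γ}
    (hg : f g = 1) (hx : ¬IsOfFinOrder (f x)) :
    g ∈ commSet (Subgroup.zpowers x) ↔ ∃ n : ℕ, 1 ≤ n ∧ Commute g (x ^ n) := by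
  have hx' : ¬IsOfFinOrder x := fun h => hx (f.isOfFinOrder h)
  constructor
  · intro h
    obtain ⟨z, hz, hz1⟩ :=
      (Subgroup.nontrivial_iff_exists_ne_one _).mp (@Infinite.instNontrivial _ h)
    obtain ⟨⟨m, rfl⟩, hgz⟩ := Subgroup.mem_inf.mp hz
    obtain ⟨j, hj⟩ := Subgroup.mem_zpowers_iff.mp (mem_conjSub_iff.mp hgz)
    have hjm : j = m := injective_zpow_iff_not_isOfFinOrder.mpr hx <| by
      simpa only [map_zpow, map_mul, map_inv, hg, one_mul, inv_one, mul_one] using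
        congrArg f hj
    have hc : Commute g (x ^ m) := by
      rw [Commute, SemiconjBy, ← mul_inv_eq_iff_eq_mul, ← hj, hjm]
    have hm : m ≠ 0 := by rintro rfl; exact hz1 (zpow_zero x)
    exact ⟨m.natAbs, Int.natAbs_pos.mpr hm, commute_pow_natAbs_iff.mpr hc⟩
  · rintro ⟨n, hn, hgx⟩
    refine mem_commSet_of_le (L := Subgroup.zpowers (x ^ n)) (infinite_zpowers.mpr ?_)
      fun y hy => ?_
    · simp only [isOfFinOrder_pow, hx', false_or]; omega
    obtain ⟨m, rfl⟩ := Subgroup.mem_zpowers_iff.mp hy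
    have hyK : (x ^ n) ^ m ∈ Subgroup.zpowers x :=
      Subgroup.zpow_mem _ (Subgroup.npow_mem_zpowers x n) m
    exact ⟨hyK, mem_conjSub_of_commute hyK (hgx.zpow_right m)⟩

end commSet

namespace SemidirectProduct

variable {N G : Type*} [Group N] [Group G] {ψ : G →* MulAut N}

theorem mk_pow (a : N) (h : G) (n : ℕ) :
    (⟨a, h⟩ : N ⋊[ψ] G) ^ n =
      ⟨((List.range n).map fun i => ψ (h ^ i) a).prod, h ^ n⟩ := by
  induction n with
  | zero => rw [pow_zero, pow_zero]; rfl
  | succ n ih =>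
    rw [pow_succ, ih]
    ext
    · simp only [mul_left, List.range_succ, List.map_append, List.prod_append, List.map_singleton,
        List.prod_singleton]
    · simp only [mul_right, pow_succ]

theorem commute_inl_mk_iff (g b : N) (h : G) :
    Commute (inl g : N ⋊[ψ] G) ⟨b, h⟩ ↔ ψ h g = b⁻¹ * g * b := by
  rw [Commute, SemiconjBy, SemidirectProduct.ext_iff]
  simp only [mul_left, mul_right, left_inl, right_inl, map_one, MulAut.one_apply, one_mul,
    mul_one, and_true, mul_assoc]
  rw [eq_inv_mul_iff_mul_eq, eq_comm]

end SemidirectProduct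

theorem zpowersHom_ofAdd_pow {G : Type*} [Group G] (φ : G) (k n : ℕ) :
    zpowersHom G φ (Multiplicative.ofAdd (k : ℤ) ^ n) = φ ^ (n * k) := by
  rw [zpowersHom_apply, toAdd_pow, toAdd_ofAdd, nsmul_eq_mul, ← Nat.cast_mul, zpow_natCast]

theorem stmt10_general {G : Type*} [Group G] (φ : MulAut G)
    (a : G) (k : ℕ) (hk : 1 ≤ k) :
    ∀ g : G,
      (SemidirectProduct.inl g ∈
        commSet (Subgroup.zpowers
          (⟨a, Multiplicative.ofAdd (k : ℤ)⟩ :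
            G ⋊[zpowersHom (MulAut G) φ] Multiplicative ℤ))) ↔
      ∃ n : ℕ, 1 ≤ n ∧
        (φ ^ (n * k)) g =
          (((List.range n).map fun i => (φ ^ (i * k)) a).prod)⁻¹ * g *
            (((List.range n).map fun i => (φ ^ (i * k)) a).prod) := by
  intro g
  have ht : ¬IsOfFinOrder (Multiplicative.ofAdd (k : ℤ)) :=
    not_isOfFinOrder_of_isMulTorsionFree (by rw [Ne, ofAdd_eq_one]; omega)
  rw [mem_commSet_zpowers_iff_exists_commute SemidirectProduct.rightHom
    (SemidirectProduct.rightHom_inl g) ht]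
  simp only [SemidirectProduct.mk_pow, SemidirectProduct.commute_inl_mk_iff,
    zpowersHom_ofAdd_pow]

theorem stmt10 {G : Type*} [Group G] (hG : Monoid.IsTorsion G) (φ : MulAut G)
    (a : G) (k : ℕ) (hk : 1 ≤ k) :
    ∀ g : G,
      (SemidirectProduct.inl g ∈
        commSet (Subgroup.zpowers
          (⟨a, Multiplicative.ofAdd (k : ℤ)⟩ :
            G ⋊[zpowersHom (MulAut G) φ] Multiplicative ℤ))) ↔
      ∃ n : ℕ, 1 ≤ n ∧
        (φ ^ (n * k)) g =
          (((List.range n).map fun i => (φ ^ (i * k)) a).prod)⁻¹ * g *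
            (((List.range n).map fun i => (φ ^ (i * k)) a).prod) :=
  stmt10_general φ a k hk
end

section
/- Let Γ = G ⋊_φ ℤ with G a torsion group and let H be an infinite virtually cyclic subgroup of Γ. Then every infinite virtually cyclic subgroup V of Comm_Γ(H) satisfies V ∼ H, where ∼ is the equivalence relation generated by having infinite intersection (i.e., V and H are commensurable up to finite index). -/
open Subgroup SemidirectProduct

private lemma aux_infinite_of_index_ne_zero {Γ : Type*} [Group Γ] [Infinite Γ] (K : Subgroup Γ)
    (h : K.index ≠ 0) : Infinite K := by
  have : K.FiniteIndex := ⟨h⟩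
  rw [← not_finite_iff_infinite]
  intro hfin
  have : Finite Γ := Finite.of_equiv _ (Subgroup.groupEquivQuotientProdSubgroup (s := K)).symm
  exact not_finite Γ

private lemma aux_infinite_inf {Γ : Type*} [Group Γ] (A B : Subgroup Γ) (h : A.relIndex B ≠ 0)
    (hB : Infinite B) : Infinite ↥(A ⊓ B) := by
  haveI := hB
  have h1 : Infinite ↥(A.subgroupOf B) := aux_infinite_of_index_ne_zero (A.subgroupOf B) h
  have h2 : (A ⊓ B).subgroupOf B = A.subgroupOf B := Subgroup.inf_subgroupOf_right A B
  have e : ↥((A ⊓ B).subgroupOf B) ≃* ↥(A ⊓ B) := Subgroup.subgroupOfEquivOfLe inf_le_right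
  rw [h2] at e
  exact e.toEquiv.infinite_iff.mp h1

private lemma aux_zpow_mem {Γ : Type*} [Group Γ] {c : Γ} (L : Subgroup Γ)
    (hL : L ≤ Subgroup.zpowers c) (h : Infinite L) : ∃ k : ℤ, k ≠ 0 ∧ c ^ k ∈ L := by
  rcases L.bot_or_exists_ne_one with hbot | ⟨x, hxL, hx1⟩
  · subst hbot; exact absurd h (by rw [not_infinite_iff_finite]; infer_instance)
  · obtain ⟨k, hk⟩ := Subgroup.mem_zpowers_iff.1 (hL hxL)
    refine ⟨k, ?_, by rwa [hk]⟩
    rintro rfl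
    simp at hk
    exact hx1 hk.symm

private lemma aux_gen {Γ : Type*} [Group Γ] (H : Subgroup Γ) [Infinite H]
    (hH : VirtuallyCyclic H) :
    ∃ c : Γ, Subgroup.zpowers c ≤ H ∧ ¬ IsOfFinOrder c ∧ (Subgroup.zpowers c).relIndex H ≠ 0 := by
  obtain ⟨C, hCcyc, hCfin⟩ := hH
  obtain ⟨g, hg⟩ := hCcyc.exists_generator
  set c : Γ := ((g : ↥H) : Γ) with hc
  have h1 : C = Subgroup.zpowers (g : ↥H) := by
    ext x
    constructor
    · intro hx
      obtain ⟨k, hk⟩ := Subgroup.mem_zpowers_iff.1 (hg ⟨x, hx⟩)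
      exact Subgroup.mem_zpowers_iff.2 ⟨k, by have := congrArg (Subtype.val) hk; simpa using this⟩
    · intro hx
      obtain ⟨k, hk⟩ := Subgroup.mem_zpowers_iff.1 hx
      rw [← hk]
      exact C.zpow_mem g.2 k
  have hmap : Subgroup.map H.subtype C = Subgroup.zpowers c := by
    rw [h1, MonoidHom.map_zpowers]
    rfl
  have hle : Subgroup.zpowers c ≤ H := by
    rw [← hmap]
    exact Subgroup.map_subtype_le C
  have hrel : (Subgroup.zpowers c).relIndex H = C.index := by
    rw [Subgroup.relIndex, Subgroup.subgroupOf, ← hmap,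
      Subgroup.comap_map_eq_self_of_injective H.subtype_injective]
  have hCinf : Infinite ↥C := aux_infinite_of_index_ne_zero C hCfin.index_ne_zero
  have hinf : Infinite ↥(Subgroup.zpowers c) := by
    rw [← hmap]
    exact (Subgroup.equivMapOfInjective C H.subtype H.subtype_injective).toEquiv.infinite_iff.mp
      hCinf
  have hford : ¬ IsOfFinOrder c := by
    rw [← infinite_zpowers]
    exact Set.infinite_coe_iff.mp hinf
  exact ⟨c, hle, hford, hrel ▸ hCfin.index_ne_zero⟩

private lemma aux_rightHom_ne_one {N : Type*} {Gr : Type*} [Group N] [Group Gr]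
    {φ' : Gr →* MulAut N} (hG : Monoid.IsTorsion N) {x : N ⋊[φ'] Gr}
    (hx : ¬ IsOfFinOrder x) : rightHom x ≠ 1 := by
  intro h
  have hmem : x ∈ (inl : N →* N ⋊[φ'] Gr).range := by
    rw [range_inl_eq_ker_rightHom]; exact h
  obtain ⟨g, rfl⟩ := hmem
  exact hx (inl.isOfFinOrder (hG g))

private lemma aux_common_power {N : Type*} {Gr : Type*} [Group N] [Group Gr]
    {φ' : Gr →* MulAut N} (hG : Monoid.IsTorsion N) {a b : N ⋊[φ'] Gr}
    (hcomm : Commute a b) (hπ : rightHom a = rightHom b) :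
    ∃ r : ℕ, 0 < r ∧ a ^ r = b ^ r := by
  have h1 : a * b⁻¹ ∈ (inl : N →* N ⋊[φ'] Gr).range := by
    rw [range_inl_eq_ker_rightHom, MonoidHom.mem_ker, map_mul, map_inv, hπ, mul_inv_cancel]
  obtain ⟨g, hg⟩ := h1
  obtain ⟨r, hr, hgr⟩ := isOfFinOrder_iff_pow_eq_one.mp (hG g)
  refine ⟨r, hr, ?_⟩
  have h2 : (a * b⁻¹) ^ r = 1 := by rw [← hg, ← map_pow, hgr, map_one]
  rw [(hcomm.inv_right).mul_pow r, inv_pow] at h2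
  exact mul_inv_eq_one.mp h2

theorem stmt12 {G : Type*} [Group G] (hG : Monoid.IsTorsion G) (φ : MulAut G)
    (H V : Subgroup (G ⋊[zpowersHom (MulAut G) φ] Multiplicative ℤ))
    [Infinite H] (hH : VirtuallyCyclic H)
    [Infinite V] (hV : VirtuallyCyclic V)
    (hsub : (V : Set (G ⋊[zpowersHom (MulAut G) φ] Multiplicative ℤ)) ⊆ commSet H) :
    Infinite ↥(V ⊓ H) := by
  obtain ⟨c, hcH, hc, hcrel⟩ := aux_gen H hH
  obtain ⟨d, hdV, hd, -⟩ := aux_gen V hV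
  have hdC : Infinite ↥(H ⊓ conjSub d H) := hsub (hdV (Subgroup.mem_zpowers d))
  -- intersect with zpowers c
  have rel1 : (Subgroup.zpowers c).relIndex (H ⊓ conjSub d H) ≠ 0 := fun h0 =>
    hcrel (Subgroup.relIndex_eq_zero_of_le_right inf_le_left h0)
  have hA1 : Infinite ↥(Subgroup.zpowers c ⊓ (H ⊓ conjSub d H)) :=
    aux_infinite_inf _ _ rel1 hdC
  -- relIndex of conjugated zpowers c in conjugated H
  have rel2 : (conjSub d (Subgroup.zpowers c)).relIndex (conjSub d H) ≠ 0 := by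
    have h3 := Subgroup.relIndex_comap (H := conjSub d (Subgroup.zpowers c))
      ((MulAut.conj d⁻¹).toMonoidHom) H
    unfold conjSub at h3 ⊢
    rw [Subgroup.comap_map_eq_self_of_injective (MulAut.conj d⁻¹).injective] at h3
    rw [← h3]
    exact hcrel
  have rel2' : (conjSub d (Subgroup.zpowers c)).relIndex
      (Subgroup.zpowers c ⊓ (H ⊓ conjSub d H)) ≠ 0 := fun h0 =>
    rel2 (Subgroup.relIndex_eq_zero_of_le_right (le_trans inf_le_right inf_le_right) h0)
  have hA2 : Infinite ↥(conjSub d (Subgroup.zpowers c) ⊓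
      (Subgroup.zpowers c ⊓ (H ⊓ conjSub d H))) :=
    aux_infinite_inf _ _ rel2' hA1
  obtain ⟨k, hk, hck⟩ := aux_zpow_mem _ (le_trans inf_le_right inf_le_left) hA2
  have hckconj : c ^ k ∈ conjSub d (Subgroup.zpowers c) := hck.1
  obtain ⟨y, hy, hyc⟩ := Subgroup.mem_map.mp hckconj
  obtain ⟨l, rfl⟩ := Subgroup.mem_zpowers_iff.1 hy
  have hconj : d⁻¹ * c ^ l * d = c ^ k := by
    simpa [MulAut.conj_apply, mul_assoc] using hyc
  -- project to ℤ to see l = k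
  have hπc : rightHom c ≠ 1 := aux_rightHom_ne_one hG hc
  have hπd : rightHom d ≠ 1 := aux_rightHom_ne_one hG hd
  set n : ℤ := Multiplicative.toAdd (rightHom c) with hn
  set δ : ℤ := Multiplicative.toAdd (rightHom d) with hδ
  have hn0 : n ≠ 0 := by
    simpa [hn] using hπc
  have hδ0 : δ ≠ 0 := by
    simpa [hδ] using hπd
  have hlk : l = k := by
    have h4 := congrArg (fun z => Multiplicative.toAdd (rightHom z)) hconj
    simp only [map_mul, map_inv, map_zpow, toAdd_mul, toAdd_inv, toAdd_zpow, smul_eq_mul] at h4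
    have h5 : l * n = k * n := by
      rw [hn]
      linarith [h4]
    exact mul_right_cancel₀ hn0 h5
  subst hlk
  -- commuting relation
  have hcd : Commute (c ^ l) d := by
    show c ^ l * d = d * c ^ l
    conv_rhs => rw [← hconj]
    group
  -- two commuting elements with equal projection
  have hα : Multiplicative.toAdd (rightHom (c ^ l)) = l * n := by
    simp [map_zpow, toAdd_zpow, hn]
  set a := d ^ (l * n) with ha
  set b := (c ^ l) ^ δ with hb
  have hcomm : Commute a b := (hcd.symm.zpow_zpow (l * n) δ)
  have hπab : rightHom a = rightHom b := by
    apply Multiplicative.toAdd.injective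
    simp only [ha, hb, map_zpow, toAdd_zpow, smul_eq_mul]
    ring
  obtain ⟨r, hr, hpow⟩ := aux_common_power hG hcomm hπab
  -- the common power
  have hdV' : d ∈ V := hdV (Subgroup.mem_zpowers d)
  have hcH' : c ∈ H := hcH (Subgroup.mem_zpowers c)
  have hwV : a ^ r ∈ V := V.pow_mem (V.zpow_mem hdV' _) r
  have hwH : a ^ r ∈ H := by
    rw [hpow]
    exact H.pow_mem (H.zpow_mem (H.zpow_mem hcH' l) δ) r
  have hwne : ¬ IsOfFinOrder (a ^ r) := by
    intro hfin
    obtain ⟨j, hj, hj1⟩ := isOfFinOrder_iff_pow_eq_one.mp hfin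
    have h6 : d ^ ((l * n) * (r * j : ℕ)) = 1 := by
      rw [zpow_mul, zpow_natCast, pow_mul, ← ha, hj1]
    have h7 : ((l * n) * ((r * j : ℕ) : ℤ)) = (0 : ℤ) :=
      injective_zpow_iff_not_isOfFinOrder.mpr hd (a₁ := (l * n) * ((r * j : ℕ) : ℤ)) (a₂ := 0)
        (by simpa using h6)
    have : (r : ℤ) * (j : ℤ) ≠ 0 := by positivity
    rcases mul_eq_zero.mp h7 with h8 | h8
    · exact mul_ne_zero hk hn0 h8
    · exact this (by exact_mod_cast h8)
  have hle2 : Subgroup.zpowers (a ^ r) ≤ V ⊓ H :=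
    Subgroup.zpowers_le.mpr (Subgroup.mem_inf.mpr ⟨hwV, hwH⟩)
  have hinf : (Subgroup.zpowers (a ^ r) : Set (G ⋊[zpowersHom (MulAut G) φ] Multiplicative ℤ)).Infinite := infinite_zpowers.mpr hwne
  exact Set.infinite_coe_iff.mpr (hinf.mono (SetLike.coe_subset_coe.mpr hle2))
end

section
/- Let Γ = T ⋊_θ ⟨s⟩ with T torsion and suppose every element of T has finite θ-orbit. If (g, s^m) ∈ Γ with m ≥ 1, then some positive power of (g, s^m) equals (e, s^{mnp}) for some n, p ≥ 1; consequently ⟨(g,s^m)⟩ ∩ ⟨(e,s)⟩ is infinite. -/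
/-!
If `θⁿ` fixes `g`, then `x = (g, sᵐ)` commutes with `s^{mn}`, hence so does `xⁿ = (P, s^{mn})`;
that is, `P` is fixed by `θ^{mn}`, so `(xⁿ)ᵖ = (Pᵖ, s^{mnp}) = (1, s^{mnp})` for `p` the order of
`P`. This element has infinite order and lies in both `⟨x⟩` and `⟨s⟩`.
-/

namespace SemidirectProduct

variable {N G : Type*} [Group N] [Group G] {φ : G →* MulAut N}

theorem commute_inl_inr_iff {n : N} {g : G} :
    Commute (inl n : N ⋊[φ] G) (inr g) ↔ φ g n = n := by
  rw [← inl_inj (φ := φ), inl_aut, map_inv, mul_inv_eq_iff_eq_mul, eq_comm]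
  rfl

theorem right_pow (x : N ⋊[φ] G) (n : ℕ) : (x ^ n).right = x.right ^ n :=
  map_pow (rightHom : N ⋊[φ] G →* G) x n

theorem exists_pow_eq_inr_of_fixed (hN : IsMulTorsion N) (x : N ⋊[φ] G) {n : ℕ}
    (hx : φ (x.right ^ n) x.left = x.left) :
    ∃ p : ℕ, 1 ≤ p ∧ x ^ (n * p) = inr (x.right ^ (n * p)) := by
  have hx_comm : Commute x (inr (x.right ^ n)) := by
    have h := (commute_inl_inr_iff.mpr hx).mul_left (((Commute.refl x.right).pow_right n).map inr)
    rwa [inl_left_mul_inr_right] at h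
  set P := (x ^ n).left
  have hxn : x ^ n = inl P * inr (x.right ^ n) := by rw [← right_pow, inl_left_mul_inr_right]
  have hP : Commute (inl P : N ⋊[φ] G) (inr (x.right ^ n)) := by
    have h := (hx_comm.pow_left n).mul_left (Commute.refl (inr (x.right ^ n))).inv_left
    rwa [hxn, mul_inv_cancel_right] at h
  refine ⟨orderOf P, (hN P).orderOf_pos, ?_⟩
  rw [pow_mul, pow_mul, hxn, hP.mul_pow, ← map_pow inl, pow_orderOf_eq_one, map_one, one_mul,
    ← map_pow]

end SemidirectProduct

theorem infinite_zpowers_inf_zpowers_of_zpow_eq {G : Type*} [Group G] {x y : G} {a b : ℤ}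
    (h : x ^ a = y ^ b) (hy : ¬IsOfFinOrder (y ^ b)) :
    Infinite ↥(Subgroup.zpowers x ⊓ Subgroup.zpowers y) := by
  have hle : Subgroup.zpowers (y ^ b) ≤ Subgroup.zpowers x ⊓ Subgroup.zpowers y :=
    Subgroup.zpowers_le.mpr ⟨h ▸ Subgroup.zpow_mem_zpowers x a, Subgroup.zpow_mem_zpowers y b⟩
  exact ((infinite_zpowers.mpr hy).mono hle).to_subtype

theorem MulAut.apply_zpow_mul_eq_self {T : Type*} [Group T] {θ : MulAut T} {g : T} {n : ℕ}
    (h : (θ ^ n) g = g) (k : ℤ) : (θ ^ (k * n)) g = g := by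
  rw [mul_comm, zpow_mul, zpow_natCast]
  exact (MulAction.stabilizer (MulAut T) g).zpow_mem h k

theorem stmt13 {T : Type*} [Group T] (hT : Monoid.IsTorsion T) (θ : MulAut T)
    (hθ : ∀ g : T, ∃ n : ℕ, 1 ≤ n ∧ (θ ^ n) g = g)
    (g : T) (m : ℤ) (hm : 1 ≤ m) :
    (∃ n p : ℕ, 1 ≤ n ∧ 1 ≤ p ∧
      ((⟨g, Multiplicative.ofAdd m⟩ : T ⋊[zpowersHom (MulAut T) θ] Multiplicative ℤ) ^ (n * p)
        = ⟨1, Multiplicative.ofAdd (m * (n * p : ℕ))⟩)) ∧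
    Infinite ↥(Subgroup.zpowers
        (⟨g, Multiplicative.ofAdd m⟩ : T ⋊[zpowersHom (MulAut T) θ] Multiplicative ℤ) ⊓
      Subgroup.zpowers
        (⟨1, Multiplicative.ofAdd 1⟩ : T ⋊[zpowersHom (MulAut T) θ] Multiplicative ℤ)) := by
  set x : T ⋊[zpowersHom (MulAut T) θ] Multiplicative ℤ := ⟨g, Multiplicative.ofAdd m⟩
  set y : T ⋊[zpowersHom (MulAut T) θ] Multiplicative ℤ := ⟨1, Multiplicative.ofAdd 1⟩
  have hy (k : ℤ) : y ^ k = SemidirectProduct.inr (Multiplicative.ofAdd k) := by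
    rw [show y = SemidirectProduct.inr (Multiplicative.ofAdd 1) from rfl, ← map_zpow,
      ← ofAdd_zsmul, smul_eq_mul, mul_one]
  obtain ⟨n, hn, hgn⟩ := hθ g
  have hfix : zpowersHom (MulAut T) θ (x.right ^ n) x.left = x.left := by
    simpa [x, mul_comm] using MulAut.apply_zpow_mul_eq_self hgn m
  obtain ⟨p, hp, hpow⟩ := SemidirectProduct.exists_pow_eq_inr_of_fixed hT x hfix
  have hxy : x ^ (n * p) = y ^ (m * (n * p : ℕ)) := by
    rw [hpow, hy, show x.right = Multiplicative.ofAdd m from rfl, ← ofAdd_nsmul, nsmul_eq_mul,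
      mul_comm]
  refine ⟨⟨n, p, hn, hp, ?_⟩, infinite_zpowers_inf_zpowers_of_zpow_eq (a := (n * p : ℕ))
    (b := m * (n * p : ℕ)) ?_ ?_⟩
  · rw [hxy, hy]; rfl
  · rwa [zpow_natCast]
  · rw [hy, SemidirectProduct.inr_injective.isOfFinOrder_iff, isOfFinOrder_iff_eq_one,
      ofAdd_eq_one]
    positivity
end

section
/- Let G be a locally finite group and φ ∈ Aut(G) such that every g ∈ G satisfies φⁿ(g) = g for some n ≥ 1. Then G ⋊_φ ℤ is locally virtually cyclic: every finitely generated subgroup of G ⋊_φ ℤ is virtually cyclic. -/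
/-!
The left components of finitely many generators of `K` have finite `φ`-orbits, so together
they generate a `φ`-invariant subgroup `H ≤ G`, finite by local finiteness. Then `K ≤ H ⋊ ℤ`,
so the projection `K → ℤ` has finite kernel; its image is cyclic, and any preimage of a
generator of the image generates a cyclic subgroup of finite index in `K`.
-/

open Subgroup MulAction SemidirectProduct

theorem VirtuallyCyclic.of_finite_ker {A B : Type*} [Group A] [Group B] (f : A →* B)
    [Finite f.ker] [IsCyclic f.range] : VirtuallyCyclic A := by
  obtain ⟨⟨_, a, rfl⟩, ha⟩ := IsCyclic.exists_generator (α := f.range)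
  refine ⟨zpowers a, inferInstance, ?_⟩
  have : Finite (A ⧸ zpowers a) := by
    refine Finite.of_surjective (fun x : f.ker => (x : A ⧸ zpowers a)) fun q => ?_
    obtain ⟨x, rfl⟩ := QuotientGroup.mk_surjective q
    obtain ⟨n, hn⟩ := mem_zpowers_iff.mp (ha ⟨f x, x, rfl⟩)
    have hfx : f a ^ n = f x := congrArg Subtype.val hn
    refine ⟨⟨x * a ^ (-n), ?_⟩, QuotientGroup.eq.mpr ⟨n, ?_⟩⟩
    · rw [MonoidHom.mem_ker, map_mul, map_zpow, zpow_neg, ← hfx, mul_inv_cancel]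
    · simp
  exact finiteIndex_of_finite_quotient

theorem MulAction.finite_orbit_zpowers {G α : Type*} [Group G] [MulAction G α] {a : G} {x : α}
    {n : ℕ} (hn : 0 < n) (h : a ^ n • x = x) : (orbit (zpowers a) x).Finite := by
  have : NeZero (Function.minimalPeriod (a • ·) x) :=
    ⟨(Function.IsPeriodicPt.minimalPeriod_pos hn (isPeriodicPt_smul_iff.mpr h)).ne'⟩
  exact Set.finite_coe_iff.mp (Finite.of_equiv _ (orbitZPowersEquiv a x).symm)

theorem Subgroup.mapsTo_closure {M : Type*} [Group M] {f : M →* M} {s : Set M}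
    (h : Set.MapsTo f s s) : Set.MapsTo f (closure s) (closure s) := fun _ hx =>
  closure_mono h.image_subset (MonoidHom.map_closure f s ▸ mem_map_of_mem f hx)

namespace SemidirectProduct

variable {N G : Type*} [Group N] [Group G] {ψ : G →* MulAut N}

def leftMemSubgroup (H : Subgroup N) (hH : ∀ g, ∀ h ∈ H, ψ g h ∈ H) :
    Subgroup (N ⋊[ψ] G) where
  carrier := {x | x.left ∈ H}
  one_mem' := H.one_mem
  mul_mem' ha hb := H.mul_mem ha (hH _ _ hb)
  inv_mem' ha := hH _ _ (H.inv_mem ha)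

theorem finite_ker_rightHom_comp_subtype {H : Subgroup N} [Finite H] {K : Subgroup (N ⋊[ψ] G)}
    (hK : ∀ x ∈ K, x.left ∈ H) : Finite (rightHom.comp K.subtype).ker := by
  refine Finite.of_injective (fun x => (⟨x.1.1.left, hK _ x.1.2⟩ : H)) fun x y hxy => ?_
  have hx : x.1.1.right = 1 := x.2
  have hy : y.1.1.right = 1 := y.2
  exact Subtype.ext <| Subtype.ext <|
    SemidirectProduct.ext (congrArg Subtype.val hxy) (hx.trans hy.symm)

end SemidirectProduct

theorem stmt14 {G : Type*} [Group G]
    (hLF : ∀ K : Subgroup G, K.FG → Finite K) (φ : MulAut G)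
    (hlb : ∀ g : G, ∃ n : ℕ, 1 ≤ n ∧ (φ ^ n) g = g) :
    ∀ K : Subgroup (G ⋊[zpowersHom (MulAut G) φ] Multiplicative ℤ),
      K.FG → VirtuallyCyclic K := by
  rintro K ⟨S, hS⟩
  set O : Set G := ⋃ s ∈ S, orbit (zpowers φ) s.left
  have hO : O.Finite := S.finite_toSet.biUnion fun s _ =>
    have ⟨n, hn, hfix⟩ := hlb s.left
    finite_orbit_zpowers hn hfix
  have : Finite (closure O) := hLF _ ⟨hO.toFinset, by rw [hO.coe_toFinset]⟩
  have hinv : ∀ r h, h ∈ closure O → zpowersHom (MulAut G) φ r h ∈ closure O := by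
    refine fun r => mapsTo_closure (f := (zpowersHom (MulAut G) φ r : G →* G)) fun g hg => ?_
    simp only [O, Set.mem_iUnion] at hg ⊢
    obtain ⟨s, hs, hg⟩ := hg
    exact ⟨s, hs, mem_orbit_of_mem_orbit (⟨_, r.toAdd, rfl⟩ : zpowers φ) hg⟩
  have hKL : K ≤ leftMemSubgroup (closure O) hinv := hS ▸ (closure_le _).mpr fun s hs =>
    subset_closure (Set.mem_biUnion hs (mem_orbit_self s.left))
  have := finite_ker_rightHom_comp_subtype (H := closure O) fun x hx => hKL hx
  exact .of_finite_ker (rightHom.comp K.subtype)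
end
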